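/- arXiv:1901.09169 — 7 statements merged into one kernel-verified Lean document; each statement's English description precedes it below -/
import Mathlib

section
/- Let k > 0, δ ≥ 0, and let p ≤ p₀ be reals with d := p₀ − p satisfying δ + d > 0. Set Δ⁺ = (kδ + 2d + √((kδ + 2d)² − k²δ²))/k and Δ⁻ = (kδ + 2d − √((kδ + 2d)² − k²δ²))/k. Then (kδ + 2d)² − k²δ² ≥ 0, Δ⁻ ≤ δ ≤ Δ⁺, Δ⁺ > 0, and p + (k/(4Δ⁺))·(Δ⁺ − δ)² = p₀. -/
/-! Clearing the denominator `4Δ` turns `q(Δ) = p₀` into the quadratic `k (Δ - δ)² = 4 d Δ`,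
whose discriminant `(kδ + 2d)² - k²δ² = 4d(kδ + d)` is nonnegative and whose roots are `Δ±`.
Since this discriminant is at least `(2d)²`, the roots straddle `δ`. -/

theorem add_div_mul_sq_sub_eq_iff {k δ p p₀ Δ : ℝ} (hΔ : Δ ≠ 0) :
    p + k / (4 * Δ) * (Δ - δ) ^ 2 = p₀ ↔ k * (Δ - δ) ^ 2 = 4 * (p₀ - p) * Δ := by
  rw [← eq_sub_iff_add_eq', div_mul_eq_mul_div, div_eq_iff (by positivity)]
  ring_nf

theorem threshold_discrim_eq (k δ d : ℝ) :
    (k * δ + 2 * d) ^ 2 - k ^ 2 * δ ^ 2 = 4 * d * (k * δ + d) := by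
  ring

section ThresholdRoot

variable {k δ d : ℝ}

theorem threshold_discrim_nonneg (hk : 0 ≤ k) (hδ : 0 ≤ δ) (hd : 0 ≤ d) :
    0 ≤ (k * δ + 2 * d) ^ 2 - k ^ 2 * δ ^ 2 := by
  rw [threshold_discrim_eq]
  positivity

theorem two_mul_le_sqrt_threshold_discrim (hk : 0 ≤ k) (hδ : 0 ≤ δ) (hd : 0 ≤ d) :
    2 * d ≤ Real.sqrt ((k * δ + 2 * d) ^ 2 - k ^ 2 * δ ^ 2) := by
  refine Real.le_sqrt_of_sq_le ?_
  rw [threshold_discrim_eq]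
  nlinarith [mul_nonneg (mul_nonneg hk hδ) hd]

theorem threshold_root_equation {s : ℝ} (hk : k ≠ 0)
    (hs : s ^ 2 = (k * δ + 2 * d) ^ 2 - k ^ 2 * δ ^ 2) :
    k * ((k * δ + 2 * d + s) / k - δ) ^ 2 = 4 * d * ((k * δ + 2 * d + s) / k) := by
  field_simp
  linear_combination hs

end ThresholdRoot

/-- The threshold variation `Δ⁺` is the larger root of `q(Δ) = p₀` where
`q(Δ) = p + (k/(4Δ))(Δ - δ)²` (Proposition III.1, equation (7)). -/
theorem threshold_root_properties
    (k δ p p₀ : ℝ) (hk : 0 < k) (hδ : 0 ≤ δ) (hp : p ≤ p₀)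
    (hpos : 0 < δ + (p₀ - p)) :
    let d := p₀ - p
    let Δplus := (k * δ + 2 * d + Real.sqrt ((k * δ + 2 * d) ^ 2 - k ^ 2 * δ ^ 2)) / k
    let Δminus := (k * δ + 2 * d - Real.sqrt ((k * δ + 2 * d) ^ 2 - k ^ 2 * δ ^ 2)) / k
    (k * δ + 2 * d) ^ 2 - k ^ 2 * δ ^ 2 ≥ 0 ∧
    Δminus ≤ δ ∧ δ ≤ Δplus ∧ 0 < Δplus ∧
    p + (k / (4 * Δplus)) * (Δplus - δ) ^ 2 = p₀ := by
  intro d Δplus Δminus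
  have hd : 0 ≤ d := sub_nonneg.2 hp
  have hdisc := threshold_discrim_nonneg hk.le hδ hd
  have h2d := two_mul_le_sqrt_threshold_discrim hk.le hδ hd
  have hlin : 0 < k * δ + 2 * d := by
    rcases hδ.eq_or_lt with rfl | hδpos
    · linarith
    · nlinarith [mul_pos hk hδpos]
  have hΔpos : 0 < Δplus := div_pos (by linarith) hk
  refine ⟨hdisc, ?_, ?_, hΔpos, ?_⟩
  · rw [div_le_iff₀ hk]
    linarith
  · rw [le_div_iff₀ hk]
    linarith
  · exact (add_div_mul_sq_sub_eq_iff hΔpos.ne').2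
      (threshold_root_equation hk.ne' (Real.sq_sqrt hdisc))
end

section
/- Let k > 0, δ ≥ 0, and p ≤ p₀ be reals with δ + (p₀ − p) > 0. The function q(Δ) = p + (k/(4Δ))·(Δ − δ)² is monotone nondecreasing on the set {Δ : Δ ≥ δ and Δ > 0}. Moreover, writing Δ⁺ = (kδ + 2(p₀−p) + √((kδ + 2(p₀−p))² − k²δ²))/k, for every Δ with δ ≤ Δ and Δ > 0 one has q(Δ) ≤ p₀ if and only if Δ ≤ Δ⁺. -/
/-- The expected per-unit cost `q(Δ) = p + (k/(4Δ))(Δ - δ)²` is nondecreasing for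
`Δ ≥ δ`, `Δ > 0`, and `q(Δ) ≤ p₀` iff `Δ ≤ Δ⁺` (Proposition III.1). -/
theorem cost_monotone_and_threshold
    (k δ p p₀ : ℝ) (hk : 0 < k) (hδ : 0 ≤ δ) (hp : p ≤ p₀)
    (hpos : 0 < δ + (p₀ - p)) :
    MonotoneOn (fun Δ : ℝ => p + (k / (4 * Δ)) * (Δ - δ) ^ 2)
      {Δ : ℝ | δ ≤ Δ ∧ 0 < Δ} ∧
    ∀ Δ : ℝ, δ ≤ Δ → 0 < Δ →
      (p + (k / (4 * Δ)) * (Δ - δ) ^ 2 ≤ p₀ ↔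
        Δ ≤ (k * δ + 2 * (p₀ - p) +
              Real.sqrt ((k * δ + 2 * (p₀ - p)) ^ 2 - k ^ 2 * δ ^ 2)) / k) := by
  constructor
  · rintro x ⟨hxδ, hx⟩ y ⟨hyδ, hy⟩ hxy
    simp only
    have hxy' : x * y ≥ δ ^ 2 := by nlinarith
    have h4x : (0:ℝ) < 4 * x := by linarith
    have h4y : (0:ℝ) < 4 * y := by linarith
    have key : k / (4 * x) * (x - δ) ^ 2 ≤ k / (4 * y) * (y - δ) ^ 2 := by
      rw [div_mul_eq_mul_div, div_mul_eq_mul_div, div_le_div_iff₀ h4x h4y]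
      nlinarith [mul_nonneg (mul_nonneg hk.le (sub_nonneg.mpr hxy)) (sub_nonneg.mpr hxy')]
    linarith
  · intro Δ hΔδ hΔ
    set c := p₀ - p with hc
    have hc0 : 0 ≤ c := by linarith
    have hD : (k * δ + 2 * c) ^ 2 - k ^ 2 * δ ^ 2 = 4 * c * (k * δ + c) := by ring
    have hD0 : 0 ≤ (k * δ + 2 * c) ^ 2 - k ^ 2 * δ ^ 2 := by
      rw [hD]; positivity
    set s := Real.sqrt ((k * δ + 2 * c) ^ 2 - k ^ 2 * δ ^ 2) with hs
    have hs0 : 0 ≤ s := Real.sqrt_nonneg _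
    have hs2 : s ^ 2 = (k * δ + 2 * c) ^ 2 - k ^ 2 * δ ^ 2 := Real.sq_sqrt hD0
    have h4Δ : (0:ℝ) < 4 * Δ := by linarith
    have hquad : (p + k / (4 * Δ) * (Δ - δ) ^ 2 ≤ p₀) ↔
        k * (Δ - δ) ^ 2 ≤ c * (4 * Δ) := by
      rw [div_mul_eq_mul_div, ← sub_nonneg]
      constructor
      · intro h
        have : k * (Δ - δ) ^ 2 / (4 * Δ) ≤ c := by linarith
        exact (div_le_iff₀ h4Δ).mp this
      · intro h
        have : k * (Δ - δ) ^ 2 / (4 * Δ) ≤ c := (div_le_iff₀ h4Δ).mpr h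
        linarith
    rw [hquad, le_div_iff₀ hk]
    constructor
    · intro h
      -- (kΔ - (kδ+2c))² ≤ s²
      nlinarith [sq_nonneg (k * Δ - (k * δ + 2 * c) + s), sq_nonneg (k * Δ - (k * δ + 2 * c) - s)]
    · intro h
      have hge : k * δ + 2 * c - s ≤ k * Δ := by
        have hs2c : 2 * c ≤ s := by
          nlinarith [hs2, add_nonneg (by positivity : (0:ℝ) ≤ 2 * c) hs0,
            mul_nonneg (mul_nonneg hk.le hδ) hc0]
        nlinarith
      nlinarith [mul_nonneg (sub_nonneg.mpr hge) (sub_nonneg.mpr h)]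
end

section
/- Let δ ≥ 0 and d ≥ 0 be reals. The function k ↦ min(1, δ + 2d/k + 2√(d² + k·d·δ)/k) is antitone (nonincreasing) on (0, ∞). -/
/-- The threshold variation `Δ_th(k) = min(1, δ + 2d/k + 2√(d² + kdδ)/k)` is
nonincreasing in the elasticity cost coefficient `k` (Proposition III.1). -/
theorem threshold_antitone_in_k (δ d : ℝ) (hδ : 0 ≤ δ) (hd : 0 ≤ d) :
    AntitoneOn (fun k : ℝ =>
        min 1 (δ + 2 * d / k + 2 * Real.sqrt (d ^ 2 + k * d * δ) / k))
      (Set.Ioi (0 : ℝ)) := by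
  intro a ha b hb hab
  simp only [Set.mem_Ioi] at ha hb
  refine min_le_min le_rfl ?_
  have h1 : 2 * d / b ≤ 2 * d / a := by
    apply div_le_div_of_nonneg_left (by linarith) ha hab
  have hXa : (0:ℝ) ≤ d ^ 2 + a * d * δ := by positivity
  have hXb : (0:ℝ) ≤ d ^ 2 + b * d * δ := by positivity
  have h2 : Real.sqrt (d ^ 2 + b * d * δ) / b ≤ Real.sqrt (d ^ 2 + a * d * δ) / a := by
    rw [div_le_div_iff₀ hb ha]
    have key : Real.sqrt (d ^ 2 + b * d * δ) * a
        = Real.sqrt ((d ^ 2 + b * d * δ) * a ^ 2) := by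
      rw [Real.sqrt_mul hXb, Real.sqrt_sq ha.le]
    have key2 : Real.sqrt (d ^ 2 + a * d * δ) * b
        = Real.sqrt ((d ^ 2 + a * d * δ) * b ^ 2) := by
      rw [Real.sqrt_mul hXa, Real.sqrt_sq hb.le]
    rw [key, key2]
    apply Real.sqrt_le_sqrt
    have hba : 0 ≤ b - a := by linarith
    nlinarith [mul_nonneg (mul_nonneg (sq_nonneg d) hba) (by linarith : (0:ℝ) ≤ a + b),
      mul_nonneg (mul_nonneg (mul_nonneg (mul_nonneg ha.le hb.le) hd) hδ) hba]
  have h2' : 2 * Real.sqrt (d ^ 2 + b * d * δ) / b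
      ≤ 2 * Real.sqrt (d ^ 2 + a * d * δ) / a := by
    rw [mul_div_assoc, mul_div_assoc]
    linarith
  linarith
end

section
/- Fix m_n > 0 and define δ(m) = min(1, m_n/m − 1/2) for m > 0. Let m, m′ be reals with 0 < m ≤ m_n, 0 < m′ ≤ m_n, m′ ≠ m, and suppose m_n/m − 1/2 < 1 (i.e., δ(m) < 1). Then: (i) if m′ < m, then m′·(1 + δ(m′))/m − 1 < δ(m); and (ii) if m′ > m, then 1 − m′·(1 − δ(m′))/m < δ(m). -/
/-! Write `δ t = min 1 (mn / t - 1/2)`. Since `δ t ≤ mn / t - 1/2`, the function `t ↦ t * δ t`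
is bounded by `mn - t/2`, with equality at `t = m` because `δ m < 1`. After multiplying by `m`, the two claims read
`m' + m' δ m' < m + m δ m` and `m - m' + m' δ m' < m δ m`, which follow linearly from these facts. -/

theorem mul_min_one_div_sub_half_le (mn : ℝ) {t : ℝ} (ht : 0 < t) :
    t * min 1 (mn / t - 1 / 2) ≤ mn - t / 2 := by
  calc t * min 1 (mn / t - 1 / 2) ≤ t * (mn / t - 1 / 2) :=
        mul_le_mul_of_nonneg_left (min_le_right _ _) ht.le
    _ = mn - t / 2 := by field_simp

theorem mul_min_one_div_sub_half_eq {mn t : ℝ} (ht : 0 < t) (h : mn / t - 1 / 2 ≤ 1) :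
    t * min 1 (mn / t - 1 / 2) = mn - t / 2 := by
  rw [min_eq_right h]
  field_simp

theorem delta_cross_lt_delta_general (mn : ℝ)
    (m m' : ℝ) (hm : 0 < m) (hm' : 0 < m')
    (hδlt : mn / m - 1 / 2 < 1) :
    let δ := fun t : ℝ => min 1 (mn / t - 1 / 2)
    (m' < m → m' * (1 + δ m') / m - 1 < δ m) ∧
    (m < m' → 1 - m' * (1 - δ m') / m < δ m) := by
  intro δ
  have hδm : m * δ m = mn - m / 2 := mul_min_one_div_sub_half_eq hm hδlt.le
  have hδm' : m' * δ m' ≤ mn - m' / 2 := mul_min_one_div_sub_half_le mn hm'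
  constructor
  · intro hlt
    rw [sub_lt_iff_lt_add, div_lt_iff₀ hm]
    linarith
  · intro hlt
    rw [sub_lt_comm, lt_div_iff₀ hm]
    linarith

/-- Claim 5 (claim-feasible): at `Φ'` with `δ(m) = min(1, m_n/m - 1/2)`, if
`δ(m) < 1` then `Δ_{i,i'} < δ(m)` for every other option `i'`. -/
theorem delta_cross_lt_delta (mn : ℝ) (hmn : 0 < mn)
    (m m' : ℝ) (hm : 0 < m) (hm' : 0 < m')
    (hmle : m ≤ mn) (hm'le : m' ≤ mn) (hne : m' ≠ m)
    (hδlt : mn / m - 1 / 2 < 1) :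
    let δ := fun t : ℝ => min 1 (mn / t - 1 / 2)
    (m' < m → m' * (1 + δ m') / m - 1 < δ m) ∧
    (m < m' → 1 - m' * (1 - δ m') / m < δ m) :=
  delta_cross_lt_delta_general mn m m' hm hm' hδlt
end

section
/- Let ĉ, m, m_n, p₀, c₀ be reals with ĉ > 0 and 0 < m ≤ m_n. For k > ĉ define P̂(k) = m·p₀ − m·c₀ − 2m_n·ĉ + k·ĉ·(2m_n − m)²/(4m(k − ĉ)) if m_n/m ≤ (k − ĉ)/k + 1/2, and P̂(k) = m·p₀ − m·c₀ − 2m·ĉ + m·ĉ²/k otherwise. Then P̂ is antitone (nonincreasing) on (ĉ, ∞); in particular it is nonincreasing on [2ĉ, ∞). -/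
/-!
Writing `t(k) = 1/ĉ - 1/k`, both branches of `P̂(k)` are values of
`m p₀ - m c₀ - 2 m_n ĉ + (2 m_n - m) x - m t(k) x²` maximised over `x ≤ ĉ`: the first branch is the
unconstrained maximum, attained at `x = (2 m_n - m) / (2 m t(k))` when this is at most `ĉ`, and the
second is the value at the boundary `x = ĉ` otherwise. Since `t` increases with `k`, every member
of this family is nonincreasing in `k`, hence so is their maximum.
-/

open Set

theorem AntitoneOn.of_isGreatest_image {α γ β : Type*} [Preorder α] [Preorder β]
    {P : α → β} {F : α → γ → β} {s : Set α} {X : Set γ}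
    (hP : ∀ k ∈ s, IsGreatest (F k '' X) (P k)) (hF : ∀ x ∈ X, AntitoneOn (F · x) s) :
    AntitoneOn P s := by
  intro a ha b hb hab
  obtain ⟨⟨x, hx, hxb⟩, -⟩ := hP b hb
  rw [← hxb]
  exact (hF x hx ha hb hab).trans ((hP a ha).2 ⟨x, hx, rfl⟩)

theorem isGreatest_quadratic_image_Iic {d s c : ℝ} (hs : 0 < s) :
    IsGreatest ((fun x => d * x - s * x ^ 2) '' Iic c)
      (if d ≤ 2 * s * c then d ^ 2 / (4 * s) else d * c - s * c ^ 2) := by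
  split_ifs with hvertex
  · have hvertex_le : d / (2 * s) ≤ c := by
      rw [div_le_iff₀ (by positivity)]
      linarith
    refine ⟨⟨d / (2 * s), hvertex_le, by field_simp; ring⟩, ?_⟩
    rintro _ ⟨x, -, rfl⟩
    have hgap : d ^ 2 / (4 * s) - (d * x - s * x ^ 2) = s * (x - d / (2 * s)) ^ 2 := by
      field_simp
      ring
    linarith [mul_nonneg hs.le (sq_nonneg (x - d / (2 * s)))]
  · refine ⟨⟨c, mem_Iic.2 le_rfl, rfl⟩, ?_⟩
    rintro _ ⟨x, hx, rfl⟩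
    have hx : x ≤ c := hx
    have hslope : 0 ≤ d - s * (c + x) := by nlinarith
    have hgap : d * c - s * c ^ 2 - (d * x - s * x ^ 2) = (c - x) * (d - s * (c + x)) := by ring
    linarith [mul_nonneg (sub_nonneg.2 hx) hslope]

noncomputable def superoptimalProfit (c m mn p₀ c₀ k : ℝ) : ℝ :=
  if mn / m ≤ (k - c) / k + 1 / 2 then
    m * p₀ - m * c₀ - 2 * mn * c + k * c * (2 * mn - m) ^ 2 / (4 * m * (k - c))
  else
    m * p₀ - m * c₀ - 2 * m * c + m * c ^ 2 / k

theorem isGreatest_superoptimalProfit {c m mn p₀ c₀ k : ℝ} (hc : 0 < c) (hm : 0 < m)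
    (hk : c < k) :
    IsGreatest
      ((fun x => m * p₀ - m * c₀ - 2 * mn * c + ((2 * mn - m) * x - m * (1 / c - 1 / k) * x ^ 2))
        '' Iic c)
      (superoptimalProfit c m mn p₀ c₀ k) := by
  have hk₀ : 0 < k := hc.trans hk
  have hs : 0 < m * (1 / c - 1 / k) :=
    mul_pos hm (sub_pos.2 (one_div_lt_one_div_of_lt hc hk))
  have hswitch : mn / m ≤ (k - c) / k + 1 / 2 ↔
      2 * mn - m ≤ 2 * (m * (1 / c - 1 / k)) * c := by
    rw [div_le_iff₀ hm]
    constructor <;> intro h <;> field_simp at h ⊢ <;> linarith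
  have hvalue : superoptimalProfit c m mn p₀ c₀ k = m * p₀ - m * c₀ - 2 * mn * c +
      if 2 * mn - m ≤ 2 * (m * (1 / c - 1 / k)) * c then
        (2 * mn - m) ^ 2 / (4 * (m * (1 / c - 1 / k)))
      else (2 * mn - m) * c - m * (1 / c - 1 / k) * c ^ 2 := by
    rw [superoptimalProfit, if_congr hswitch rfl rfl]
    split_ifs
    · field_simp
    · field_simp
      ring
  rw [hvalue, ← image_image (fun y => m * p₀ - m * c₀ - 2 * mn * c + y)]
  exact (monotone_id.const_add _).map_isGreatest (isGreatest_quadratic_image_Iic hs)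

theorem superoptimal_profit_antitone_general (c m mn p₀ c₀ : ℝ) (hc : 0 < c)
    (hm : 0 < m) :
    AntitoneOn (fun k : ℝ =>
        if mn / m ≤ (k - c) / k + 1 / 2 then
          m * p₀ - m * c₀ - 2 * mn * c + k * c * (2 * mn - m) ^ 2 / (4 * m * (k - c))
        else
          m * p₀ - m * c₀ - 2 * m * c + m * c ^ 2 / k)
      (Set.Ioi c) ∧
    AntitoneOn (fun k : ℝ =>
        if mn / m ≤ (k - c) / k + 1 / 2 then
          m * p₀ - m * c₀ - 2 * mn * c + k * c * (2 * mn - m) ^ 2 / (4 * m * (k - c))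
        else
          m * p₀ - m * c₀ - 2 * m * c + m * c ^ 2 / k)
      (Set.Ici (2 * c)) := by
  have hIoi : AntitoneOn (superoptimalProfit c m mn p₀ c₀) (Ioi c) := by
    refine .of_isGreatest_image (fun k hk => isGreatest_superoptimalProfit hc hm hk) ?_
    intro x _ a ha b _ hab
    have hinv : 1 / b ≤ 1 / a := one_div_le_one_div_of_le (hc.trans ha) hab
    dsimp only
    gcongr
  exact ⟨hIoi, hIoi.mono fun k (hk : 2 * c ≤ k) => show c < k by linarith⟩

/-- Last assertion of Lemma V.1: the super-optimal profit `P̂(k)` collected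
from a customer type is nonincreasing in the elasticity cost coefficient `k`
on `(ĉ, ∞)`, in particular on `[2ĉ, ∞)`. -/
theorem superoptimal_profit_antitone (c m mn p₀ c₀ : ℝ) (hc : 0 < c)
    (hm : 0 < m) (hmn : m ≤ mn) :
    AntitoneOn (fun k : ℝ =>
        if mn / m ≤ (k - c) / k + 1 / 2 then
          m * p₀ - m * c₀ - 2 * mn * c + k * c * (2 * mn - m) ^ 2 / (4 * m * (k - c))
        else
          m * p₀ - m * c₀ - 2 * m * c + m * c ^ 2 / k)
      (Set.Ioi c) ∧
    AntitoneOn (fun k : ℝ =>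
        if mn / m ≤ (k - c) / k + 1 / 2 then
          m * p₀ - m * c₀ - 2 * mn * c + k * c * (2 * mn - m) ^ 2 / (4 * m * (k - c))
        else
          m * p₀ - m * c₀ - 2 * m * c + m * c ^ 2 / k)
      (Set.Ici (2 * c)) :=
  superoptimal_profit_antitone_general c m mn p₀ c₀ hc hm
end

section
/- For all reals δ, Δ with 0 < δ ≤ Δ ≤ 1, one has δ + 1 − Δ + (1/8)·(Δ² − δ²) + (δ²/4)·log(Δ/δ) + (1 − δ/2)·(Δ − δ) ≥ 1. -/
/-!
The factor minus `1` equals `g Δ - g δ` for `g t = t² / 8 - δ t / 2 + (δ² / 4) log t`, whose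
derivative `(t - δ)² / (4 t)` is nonnegative for `t > 0`; so `g` is monotone and the
difference is nonnegative.
-/

open Real Set

noncomputable def consumptionPotential (δ t : ℝ) : ℝ :=
  t ^ 2 / 8 - δ * t / 2 + δ ^ 2 / 4 * log t

theorem hasDerivAt_consumptionPotential (δ : ℝ) {t : ℝ} (ht : 0 < t) :
    HasDerivAt (consumptionPotential δ) ((t - δ) ^ 2 / (4 * t)) t := by
  have hpoly : HasDerivAt (fun t : ℝ => t ^ 2 / 8 - δ * t / 2) (t / 4 - δ / 2) t :=
    (((hasDerivAt_pow 2 t).div_const 8).sub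
      (((hasDerivAt_id t).const_mul δ).div_const 2)).congr_deriv (by push_cast; ring)
  exact (hpoly.add ((hasDerivAt_log ht.ne').const_mul (δ ^ 2 / 4))).congr_deriv
    (by field_simp; ring)

theorem monotoneOn_consumptionPotential (δ : ℝ) : MonotoneOn (consumptionPotential δ) (Ioi 0) :=
  monotoneOn_of_hasDerivWithinAt_nonneg (convex_Ioi 0)
    (fun _ ht => (hasDerivAt_consumptionPotential δ ht).continuousAt.continuousWithinAt)
    (fun _ ht => (hasDerivAt_consumptionPotential δ (interior_subset ht)).hasDerivWithinAt)
    (fun t ht => by have : 0 < t := interior_subset ht; positivity)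

theorem energy_consumption_factor_ge_one_general (δ Δ : ℝ)
    (hδ : 0 < δ) (hδΔ : δ ≤ Δ) :
    δ + 1 - Δ + (1 / 8) * (Δ ^ 2 - δ ^ 2) + (δ ^ 2 / 4) * Real.log (Δ / δ) +
      (1 - δ / 2) * (Δ - δ) ≥ 1 := by
  have hmono : consumptionPotential δ δ ≤ consumptionPotential δ Δ :=
    monotoneOn_consumptionPotential δ hδ (hδ.trans_le hδΔ) hδΔ
  rw [log_div (hδ.trans_le hδΔ).ne' hδ.ne']
  unfold consumptionPotential at hmono
  linarith

/-- In the low-penalty regime, the expected energy consumption factor is at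
least `1` (proved inside Claim 1 of the appendix, toward Lemma V.1). -/
theorem energy_consumption_factor_ge_one (δ Δ : ℝ)
    (hδ : 0 < δ) (hδΔ : δ ≤ Δ) (hΔ : Δ ≤ 1) :
    δ + 1 - Δ + (1 / 8) * (Δ ^ 2 - δ ^ 2) + (δ ^ 2 / 4) * Real.log (Δ / δ) +
      (1 - δ / 2) * (Δ - δ) ≥ 1 :=
  energy_consumption_factor_ge_one_general δ Δ hδ hδΔ
end

section
/- Let n ≥ 2 and let m₁ < m₂ < … < m_n be positive reals with m_n ≤ (3/2)·m₁. For i = 1, …, n set δᵢ = m_n/mᵢ − 1/2 and Δᵢ = 1 − (mᵢ·(1 − δᵢ))/m₁ = 1 − ((3/2)mᵢ − m_n)/m₁, and define C₁ = 2m_n·(1 − δ₁) + ∑_{i=1}^{n−1} mᵢ·(1 + δᵢ)·(Δᵢ − Δ_{i+1}) + m_n·(1 + δ_n)·Δ_n. Then (2m_n − C₁)/(2m_n − (3/2)·m₁) ≥ 0.476. -/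
/-!
With `a = m₁` and `M = m_n`, one has `mᵢ(1 + δᵢ) = mᵢ/2 + M` and `Δᵢ - Δᵢ₊₁ = 3(mᵢ₊₁ - mᵢ)/(2a)`,
so the middle sum of `C₁` is `3/(2a)` times a left Riemann sum of `F' x = x/2 + M` with
`F x = x²/4 + Mx`. As `F` is convex, each term is at most the corresponding increment of `F`,
and the sum telescopes to `F M - F a`. This gives `2M - C₁ ≥ (7M² - 8Ma + 3a²)/(8a)`, and the
remaining inequality is a quadratic in `M/a` with negative discriminant.
-/

theorem mul_one_add_div_sub_half {x : ℝ} (hx : x ≠ 0) (M : ℝ) :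
    x * (1 + (M / x - 1 / 2)) = x / 2 + M := by
  field_simp; ring

theorem mul_one_sub_div_sub_half {x : ℝ} (hx : x ≠ 0) (M : ℝ) :
    x * (1 - (M / x - 1 / 2)) = 3 / 2 * x - M := by
  field_simp; ring

-- Tangent-line inequality for `F x = x²/4 + M x`; the gap is `(y - x)²/4`.
theorem half_add_mul_sub_le (M x y : ℝ) :
    (x / 2 + M) * (y - x) ≤ (y ^ 2 / 4 + M * y) - (x ^ 2 / 4 + M * x) := by
  nlinarith [sq_nonneg (y - x)]

theorem sum_Ico_half_add_mul_sub_le (M : ℝ) (x : ℕ → ℝ) {k n : ℕ} (hkn : k ≤ n) :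
    ∑ i ∈ Finset.Ico k n, (x i / 2 + M) * (x (i + 1) - x i) ≤
      (x n ^ 2 / 4 + M * x n) - (x k ^ 2 / 4 + M * x k) := by
  rw [← Finset.sum_Ico_sub (fun i => x i ^ 2 / 4 + M * x i) hkn]
  exact Finset.sum_le_sum fun i _ => half_add_mul_sub_le M (x i) (x (i + 1))

-- In `t = M/a` this is `7t² - 15.616t + 8.712 ≥ 0`, minimal at `t = 15616/14000`.
theorem mul_sub_le_quadratic_div (a M : ℝ) (ha : 0 < a) :
    0.476 * (2 * M - 3 / 2 * a) ≤ (7 * M ^ 2 - 8 * M * a + 3 * a ^ 2) / (8 * a) := by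
  rw [le_div_iff₀ (by positivity)]
  nlinarith [sq_nonneg (14000 * M - 15616 * a), sq_nonneg a]

theorem pessimistic_capacity_case1_general (n : ℕ) (hn : 2 ≤ n) (m : ℕ → ℝ)
    (hpos : ∀ i, 1 ≤ i → i ≤ n → 0 < m i)
    (hmono : ∀ i j, 1 ≤ i → i < j → j ≤ n → m i < m j) :
    let δ := fun i => m n / m i - 1 / 2
    let Δ := fun i => 1 - (m i * (1 - δ i)) / m 1
    let C₁ := 2 * m n * (1 - δ 1) +
      (∑ i ∈ Finset.Ico 1 n, m i * (1 + δ i) * (Δ i - Δ (i + 1))) +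
      m n * (1 + δ n) * Δ n
    (2 * m n - C₁) / (2 * m n - (3 / 2) * m 1) ≥ 0.476 := by
  intro δ Δ C₁
  have ha : 0 < m 1 := hpos 1 le_rfl (by omega)
  have haM : m 1 < m n := hmono 1 n le_rfl (by omega) le_rfl
  have hM : m n ≠ 0 := (ha.trans haM).ne'
  have hsummand : ∀ i ∈ Finset.Ico 1 n, m i * (1 + δ i) * (Δ i - Δ (i + 1)) =
      3 / (2 * m 1) * ((m i / 2 + m n) * (m (i + 1) - m i)) := by
    intro i hi
    obtain ⟨hi1, hin⟩ := Finset.mem_Ico.mp hi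
    simp only [δ, Δ, mul_one_add_div_sub_half (hpos i hi1 hin.le).ne',
      mul_one_sub_div_sub_half (hpos i hi1 hin.le).ne',
      mul_one_sub_div_sub_half (hpos (i + 1) (by omega) hin).ne']
    field_simp
    ring
  have hC₁ : C₁ ≤ 2 * m n - (7 * m n ^ 2 - 8 * m n * m 1 + 3 * m 1 ^ 2) / (8 * m 1) := by
    have hsum := mul_le_mul_of_nonneg_left (sum_Ico_half_add_mul_sub_le (m n) m (by omega : 1 ≤ n))
      (by positivity : 0 ≤ 3 / (2 * m 1))
    rw [Finset.mul_sum, ← Finset.sum_congr rfl hsummand] at hsum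
    calc C₁ ≤ 2 * m n * (1 - δ 1)
          + 3 / (2 * m 1) * ((m n ^ 2 / 4 + m n * m n) - (m 1 ^ 2 / 4 + m n * m 1))
          + m n * (1 + δ n) * Δ n := by simp only [C₁]; linarith
      _ = _ := by simp only [δ, Δ]; field_simp; ring
  rw [ge_iff_le, le_div_iff₀ (by linarith)]
  linarith [mul_sub_le_quadratic_div (m 1) (m n) ha]

/-- Case 1 in the proof of Lemma V.2: with `m₁ < ⋯ < m_n ≤ (3/2)m₁`, the
worst-case capacity `C₁` provisioned for a type-`m₁` customer under the
pessimistic setting satisfies `(2m_n - C₁)/(2m_n - (3/2)m₁) ≥ 0.476`. -/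
theorem pessimistic_capacity_case1 (n : ℕ) (hn : 2 ≤ n) (m : ℕ → ℝ)
    (hpos : ∀ i, 1 ≤ i → i ≤ n → 0 < m i)
    (hmono : ∀ i j, 1 ≤ i → i < j → j ≤ n → m i < m j)
    (hclose : m n ≤ (3 / 2) * m 1) :
    let δ := fun i => m n / m i - 1 / 2
    let Δ := fun i => 1 - (m i * (1 - δ i)) / m 1
    let C₁ := 2 * m n * (1 - δ 1) +
      (∑ i ∈ Finset.Ico 1 n, m i * (1 + δ i) * (Δ i - Δ (i + 1))) +
      m n * (1 + δ n) * Δ n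
    (2 * m n - C₁) / (2 * m n - (3 / 2) * m 1) ≥ 0.476 :=
  pessimistic_capacity_case1_general n hn m hpos hmono
end
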